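/- arXiv:1903.09619 — 2 statements merged into one kernel-verified Lean document; each statement's English description precedes it below -/
import Mathlib

section
/- For every k ≥ 1, every natural number n with H(n) = k and n < 2^k is odd. -/
/-- The height function: H(1) = 0 and H(n) = H(φ(n)) + 1 for n ≥ 2. -/
def H : ℕ → ℕ
  | 0 => 0
  | 1 => 0
  | n + 2 => H (Nat.totient (n + 2)) + 1
  decreasing_by exact Nat.totient_lt _ (by omega)

/-- The sum-of-heights function S(n) = ∑_{k=1}^n H(k). -/
def S (n : ℕ) : ℕ := ∑ k ∈ Finset.Icc 1 n, H k

/-!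
Every step of the totient chain starting from an even `n ≥ 2` stays even until it reaches `2`,
and `φ (2 * m) ≤ m`, so each step at least halves the number. Hence an even `n` has
`2 ^ H n ≤ n`, and an even `n < 2 ^ H n` cannot exist.
-/

lemma H_of_two_le {n : ℕ} (hn : 2 ≤ n) : H n = H (Nat.totient n) + 1 := by
  obtain ⟨m, rfl⟩ : ∃ m, n = m + 2 := ⟨n - 2, by omega⟩
  rw [H]

lemma H_two : H 2 = 1 := by
  rw [H_of_two_le le_rfl, Nat.totient_two, H]

lemma Nat.totient_two_mul_le (m : ℕ) : Nat.totient (2 * m) ≤ m := by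
  induction m using Nat.strong_induction_on with
  | _ m ih =>
    rcases Nat.even_or_odd m with ⟨j, rfl⟩ | hodd
    · rcases Nat.eq_zero_or_pos j with rfl | hj
      · simp
      rw [Nat.totient_two_mul_of_even ⟨j, rfl⟩, ← two_mul]
      have := ih j (by omega)
      omega
    · rw [Nat.totient_two_mul_of_odd hodd]
      exact Nat.totient_le m

lemma two_pow_H_le_of_even {n : ℕ} (hn : Even n) (h2 : 2 ≤ n) : 2 ^ H n ≤ n := by
  induction n using Nat.strong_induction_on with
  | _ n ih =>
    rcases h2.eq_or_lt with rfl | hgt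
    · simp [H_two]
    have hφ_even : Even (Nat.totient n) := Nat.totient_even hgt
    have hφ_two_le : 2 ≤ Nat.totient n := by
      have := Nat.totient_pos.mpr (by omega : 0 < n)
      rcases hφ_even with ⟨t, ht⟩
      omega
    have hφ_half : 2 * Nat.totient n ≤ n := by
      obtain ⟨m, rfl⟩ := hn
      rw [← two_mul]
      have := Nat.totient_two_mul_le m
      omega
    calc 2 ^ H n = 2 * 2 ^ H (Nat.totient n) := by rw [H_of_two_le h2, pow_succ']
      _ ≤ 2 * Nat.totient n := by
        gcongr
        exact ih _ (Nat.totient_lt n (by omega)) hφ_even hφ_two_le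
      _ ≤ n := hφ_half

theorem odd_of_lt_pow_at_height (k n : ℕ) (hk : 1 ≤ k) (hH : H n = k)
    (hlt : n < 2 ^ k) : Odd n := by
  refine Nat.not_even_iff_odd.mp fun heven => ?_
  rcases Nat.eq_zero_or_pos n with rfl | hpos
  · rw [H] at hH
    omega
  have h2 : 2 ≤ n := by
    rcases heven with ⟨m, rfl⟩
    omega
  have : 2 ^ k ≤ n := hH ▸ two_pow_H_le_of_even heven h2
  omega
end

section
/- Let p and q be (not necessarily distinct) primes with p ≥ 5 and q ≥ 5, and suppose H(pq) = k. Then pq < 2·3^{k−2} + 1. -/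
open Nat

lemma H_eq_of_two_le {n : ℕ} (hn : 2 ≤ n) : H n = H (φ n) + 1 := by
  obtain ⟨m, rfl⟩ : ∃ m, n = m + 2 := ⟨n - 2, by omega⟩
  rw [H]

/-- The number of even terms of the chain `n, φ n, φ² n, …, 1`: every term after the first is
even or equal to `1`, which gives the formula. -/
def evenHeight (n : ℕ) : ℕ := if 2 ∣ n then H n else H n - 1

lemma evenHeight_one : evenHeight 1 = 0 := by
  simp [evenHeight, H]

lemma evenHeight_totient (n : ℕ) : evenHeight (φ n) = H (φ n) := by
  rcases lt_or_ge 2 n with h | h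
  · simp [evenHeight, (Nat.totient_even h).two_dvd]
  · interval_cases n <;> simp [evenHeight, H]

lemma evenHeight_eq_totient_add {n : ℕ} (hn : n ≠ 0) :
    evenHeight n = evenHeight (φ n) + if 2 ∣ n then 1 else 0 := by
  rcases eq_or_ne n 1 with rfl | hn1
  · simp
  rw [evenHeight_totient, evenHeight, H_eq_of_two_le (by omega)]
  split_ifs <;> omega

lemma H_eq_evenHeight_add_one {n : ℕ} (hn : 2 ≤ n) (hodd : ¬ 2 ∣ n) :
    H n = evenHeight n + 1 := by
  rw [evenHeight_eq_totient_add (by omega), evenHeight_totient, H_eq_of_two_le hn]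
  simp [hodd]

lemma evenHeight_prime {p : ℕ} (hp : p.Prime) (hp2 : p ≠ 2) :
    evenHeight p = evenHeight (p - 1) := by
  have hodd : ¬ 2 ∣ p := Nat.two_dvd_ne_zero.mpr (Nat.odd_iff.mp (hp.odd_of_ne_two hp2))
  simp [evenHeight_eq_totient_add hp.ne_zero, totient_prime hp, hodd]

lemma evenHeight_mul_of_coprime {m n : ℕ} (hm : m ≠ 0) (hn : n ≠ 0) (hmn : m.Coprime n)
    (hφ : evenHeight (φ m * φ n) = evenHeight (φ m) + evenHeight (φ n)) :
    evenHeight (m * n) = evenHeight m + evenHeight n := by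
  have hparity : ¬ (2 ∣ m ∧ 2 ∣ n) := fun ⟨hm2, hn2⟩ =>
    absurd (hmn ▸ Nat.dvd_gcd hm2 hn2 : 2 ∣ 1) (by norm_num)
  rw [evenHeight_eq_totient_add (mul_ne_zero hm hn), totient_mul hmn, hφ,
    evenHeight_eq_totient_add hm, evenHeight_eq_totient_add hn]
  simp only [Nat.Prime.dvd_mul prime_two]
  split_ifs <;> omega

lemma evenHeight_prime_mul_of_dvd {p n : ℕ} (hp : p.Prime) (hn : n ≠ 0) (hpn : p ∣ n)
    (hφ : evenHeight (p * φ n) = evenHeight p + evenHeight (φ n)) :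
    evenHeight (p * n) = evenHeight p + evenHeight n := by
  have hparity : 2 ∣ p * n ↔ 2 ∣ n :=
    ⟨fun h => ((Nat.Prime.dvd_mul prime_two).mp h).elim (·.trans hpn) id, (Dvd.dvd.mul_left · p)⟩
  rw [evenHeight_eq_totient_add (mul_ne_zero hp.ne_zero hn), totient_mul_of_prime_of_dvd hp hpn,
    hφ, evenHeight_eq_totient_add hn]
  simp only [hparity, add_assoc]

theorem evenHeight_mul {m n : ℕ} (hm : m ≠ 0) (hn : n ≠ 0) :
    evenHeight (m * n) = evenHeight m + evenHeight n := by
  induction h : m * n using Nat.strong_induction_on generalizing m n with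
  | _ N ih =>
  subst h
  rcases eq_or_ne (m * n) 1 with hmn1 | hmn1
  · simp [mul_eq_one.mp hmn1, evenHeight_one]
  by_cases hmn : m.Coprime n
  · refine evenHeight_mul_of_coprime hm hn hmn (ih _ ?_ (totient_eq_zero.not.mpr hm)
      (totient_eq_zero.not.mpr hn) rfl)
    rw [← totient_mul hmn]
    exact totient_lt _ (Nat.one_lt_iff_ne_zero_and_ne_one.mpr ⟨mul_ne_zero hm hn, hmn1⟩)
  obtain ⟨p, hp, ⟨m, rfl⟩, hpn⟩ := Nat.Prime.not_coprime_iff_dvd.mp hmn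
  have hp2 := hp.two_le
  have hn2 : 2 ≤ n := (Nat.le_of_dvd (by omega) hpn).trans' hp2
  have hm0 : m ≠ 0 := right_ne_zero_of_mul hm
  have hmn0 : m * n ≠ 0 := mul_ne_zero hm0 hn
  have hmn2 : 2 ≤ m * n := hn2.trans (Nat.le_mul_of_pos_left n (by omega))
  calc evenHeight (p * m * n) = evenHeight (p * (m * n)) := by rw [mul_assoc]
    _ = evenHeight p + evenHeight (m * n) := by
      refine evenHeight_prime_mul_of_dvd hp hmn0 (hpn.mul_left m) (ih _ ?_ hp.ne_zero
        (totient_eq_zero.not.mpr hmn0) rfl)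
      rw [mul_assoc]
      exact Nat.mul_lt_mul_of_pos_left (totient_lt _ (by omega)) (by omega)
    _ = evenHeight p + evenHeight m + evenHeight n := by
      rw [ih _ (by rw [mul_assoc]; nlinarith [Nat.pos_of_ne_zero hmn0]) hm0 hn rfl, add_assoc]
    _ = evenHeight (p * m) + evenHeight n := by
      rw [ih _ (by nlinarith [Nat.pos_of_ne_zero hm]) hp.ne_zero hm0 rfl]

def parityFactor (n : ℕ) : ℕ := if 2 ∣ n then 2 else 3

lemma parityFactor_mul_le (a b : ℕ) :
    parityFactor a * parityFactor b ≤ 3 * parityFactor (a * b) := by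
  simp only [parityFactor, Nat.Prime.dvd_mul prime_two]
  split_ifs <;> omega

lemma three_mul_mul_le_of_le {a b X Y : ℕ} (ha : 3 * a ≤ parityFactor a * X)
    (hb : 3 * b ≤ parityFactor b * Y) : 3 * (a * b) ≤ parityFactor (a * b) * (X * Y) := by
  refine Nat.le_of_mul_le_mul_left ?_ (by norm_num : 0 < 3)
  calc 3 * (3 * (a * b)) = 3 * a * (3 * b) := by ring
    _ ≤ parityFactor a * X * (parityFactor b * Y) := Nat.mul_le_mul ha hb
    _ = parityFactor a * parityFactor b * (X * Y) := by ring
    _ ≤ 3 * parityFactor (a * b) * (X * Y) := Nat.mul_le_mul_right _ (parityFactor_mul_le a b)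
    _ = 3 * (parityFactor (a * b) * (X * Y)) := by ring

/-- That is, `n ≤ 3 ^ evenHeight n` for odd `n` and `n ≤ 2 * 3 ^ (evenHeight n - 1)` for even
`n`. -/
theorem three_mul_le_parityFactor_mul_three_pow_evenHeight {n : ℕ} (hn : n ≠ 0) :
    3 * n ≤ parityFactor n * 3 ^ evenHeight n := by
  induction n using Nat.strong_induction_on with
  | _ n ih =>
  rcases eq_or_ne n 1 with rfl | hn1
  · simp [parityFactor, evenHeight_one]
  by_cases hp : n.Prime
  · rcases eq_or_ne n 2 with rfl | hn2
    · rw [evenHeight_eq_totient_add two_ne_zero, totient_two, evenHeight_one]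
      simp [parityFactor]
    have hodd := Nat.odd_iff.mp (hp.odd_of_ne_two hn2)
    have hprev := ih (n - 1) (by omega) (by omega)
    rw [parityFactor, if_pos (by omega)] at hprev
    rw [parityFactor, if_neg (by omega), evenHeight_prime hp hn2]
    omega
  obtain ⟨a, ⟨b, rfl⟩, ha2, han⟩ := Nat.exists_dvd_of_not_prime2 (by omega) hp
  have hb0 : b ≠ 0 := right_ne_zero_of_mul hn
  rw [evenHeight_mul (by omega) hb0, pow_add]
  exact three_mul_mul_le_of_le (ih a han (by omega)) (ih b (by nlinarith) hb0)

lemma prime_le_two_mul_three_pow_evenHeight {p : ℕ} (hp : p.Prime) (hp5 : 5 ≤ p) :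
    2 ≤ evenHeight p ∧ p ≤ 2 * 3 ^ (evenHeight p - 1) + 1 := by
  have hodd := Nat.odd_iff.mp (hp.odd_of_ne_two (by omega))
  have hbound := three_mul_le_parityFactor_mul_three_pow_evenHeight (n := p - 1) (by omega)
  rw [parityFactor, if_pos (by omega), ← evenHeight_prime hp (by omega)] at hbound
  have hD : 2 ≤ evenHeight p := by
    by_contra! hD
    have : 3 ^ evenHeight p ≤ 3 ^ 1 := Nat.pow_le_pow_right (by norm_num) (by omega)
    omega
  refine ⟨hD, ?_⟩
  rw [show evenHeight p = evenHeight p - 1 + 1 by omega, pow_succ] at hbound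
  omega

theorem pq_bound (p q k : ℕ) (hp : p.Prime) (hq : q.Prime)
    (hp5 : 5 ≤ p) (hq5 : 5 ≤ q) (hH : H (p * q) = k) :
    p * q < 2 * 3 ^ (k - 2) + 1 := by
  have hpq_odd : ¬ 2 ∣ p * q := by
    have := Nat.odd_iff.mp (hp.odd_of_ne_two (by omega))
    have := Nat.odd_iff.mp (hq.odd_of_ne_two (by omega))
    rw [Nat.Prime.dvd_mul prime_two]
    omega
  have hk : k = evenHeight p + evenHeight q + 1 := by
    rw [← hH, H_eq_evenHeight_add_one (by nlinarith) hpq_odd, evenHeight_mul hp.ne_zero hq.ne_zero]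
  obtain ⟨hDp, hp_le⟩ := prime_le_two_mul_three_pow_evenHeight hp hp5
  obtain ⟨hDq, hq_le⟩ := prime_le_two_mul_three_pow_evenHeight hq hq5
  set x := 3 ^ (evenHeight p - 1)
  set y := 3 ^ (evenHeight q - 1)
  have hx : 3 ≤ x := Nat.le_self_pow (by omega) 3
  have hy : 3 ≤ y := Nat.le_self_pow (by omega) 3
  have hpow : 3 ^ (k - 2) = 3 * (x * y) := by
    rw [← pow_add, ← pow_succ']
    congr 1
    omega
  rw [hpow]
  nlinarith [Nat.mul_le_mul hp_le hq_le]
end
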